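/- In the Hecke ring R(Γ̃,Δ̃) of the twisted pair attached to GSp_{2n} (Γ̃ = GSp_{2n}(ℤ_p) × ℤ_p^{2n}, Δ̃ = (GSp_{2n}(ℚ_p) ∩ M_{2n}(ℤ_p)) × ℤ_p^{2n} with twisted product), let T̃(p^k) denote the sum of all double coset basis elements T̃(Γ̃(A,a)Γ̃) with v_p(μ(A)) = k. Then for 0 < k < l, the elements T̃(p^k) and T̃(p^l) do not commute: T̃(p^k)T̃(p^l) ≠ T̃(p^l)T̃(p^k). -/

import Mathlib

/-! STATEMENT 19: in the Hecke ring of the twisted pair attached to `GSp_{2n}` over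
`ℤ_p` (the local Hecke ring of the Heisenberg Lie algebra of dimension `2n+1`), the
elements `T̃(p^k)` and `T̃(p^l)` do not commute for `0 < k < l`. The Hecke ring is
axiomatized as a ring with ℤ-basis the double cosets, multiplication given by the
standard structure constants, and `T̃(p^m)` the (finite) sum of the basis elements
with `v_p(μ(A)) = m`. -/

open Matrix

variable (p : ℕ) [Fact p.Prime] (n : ℕ)

/-- Coordinates of `ℚ_p^{2n}`. -/
abbrev Idx (n : ℕ) := Fin (n + 1) ⊕ Fin (n + 1)

/-- The standard symplectic form. -/
noncomputable def Jmat : Matrix (Idx n) (Idx n) ℚ_[p] :=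
  Matrix.fromBlocks 0 1 (-1) 0

/-- The similitude multiplier `μ(A)`, read off from `Aᵀ J A = μ J` at the entry
where `J` equals `1`. -/
noncomputable def simil (A : Matrix (Idx n) (Idx n) ℚ_[p]) : ℚ_[p] :=
  (Aᵀ * Jmat p n * A) (Sum.inl 0) (Sum.inr 0)

/-- `GSp_{2n}(ℚ_p)`. -/
def GSpQ : Set (Matrix (Idx n) (Idx n) ℚ_[p]) :=
  {A | ∃ μ : ℚ_[p], μ ≠ 0 ∧ Aᵀ * Jmat p n * A = μ • Jmat p n}

/-- `Γ = GSp_{2n}(ℤ_p)`. -/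
def GSpZ : Set (Matrix (Idx n) (Idx n) ℚ_[p]) :=
  {A | A ∈ GSpQ p n ∧ (∀ i j, ‖A i j‖ ≤ 1) ∧ ‖A.det‖ = 1}

/-- `Γ̃ = Γ × ℤ_p^{2n}`. -/
def GammaT : Set (Matrix (Idx n) (Idx n) ℚ_[p] × (Idx n → ℚ_[p])) :=
  {x | x.1 ∈ GSpZ p n ∧ ∀ i, ‖x.2 i‖ ≤ 1}

/-- `Δ̃`: integral twisted elements. -/
def DeltaT : Set (Matrix (Idx n) (Idx n) ℚ_[p] × (Idx n → ℚ_[p])) :=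
  {x | x.1 ∈ GSpQ p n ∧ (∀ i j, ‖x.1 i j‖ ≤ 1) ∧ ∀ i, ‖x.2 i‖ ≤ 1}

/-- `Δ̃_{p^m}`: elements of `Δ̃` with `v_p(μ) = m`. -/
def DeltaTval (m : ℕ) : Set (Matrix (Idx n) (Idx n) ℚ_[p] × (Idx n → ℚ_[p])) :=
  {x | x ∈ DeltaT p n ∧ ∃ μ : ℚ_[p], μ ≠ 0 ∧
    x.1ᵀ * Jmat p n * x.1 = μ • Jmat p n ∧ μ.valuation = (m : ℤ)}

/-- The twisted product `(A,a)(B,b) = (AB, Ab + μ(B)a)`. -/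
noncomputable def tmulG (x y : Matrix (Idx n) (Idx n) ℚ_[p] × (Idx n → ℚ_[p])) :
    Matrix (Idx n) (Idx n) ℚ_[p] × (Idx n → ℚ_[p]) :=
  (x.1 * y.1, x.1.mulVec y.2 + simil p n y.1 • x.2)

/-- The twisted inverse `(X,x)⁻¹ = (X⁻¹, -μ(X)⁻¹ X⁻¹ x)`. -/
noncomputable def tinvG (x : Matrix (Idx n) (Idx n) ℚ_[p] × (Idx n → ℚ_[p])) :
    Matrix (Idx n) (Idx n) ℚ_[p] × (Idx n → ℚ_[p]) :=
  (x.1⁻¹, -((simil p n x.1)⁻¹ • x.1⁻¹.mulVec x.2))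

/-- Left coset `Γ̃ x`. -/
noncomputable def tlcG (x : Matrix (Idx n) (Idx n) ℚ_[p] × (Idx n → ℚ_[p])) :
    Set (Matrix (Idx n) (Idx n) ℚ_[p] × (Idx n → ℚ_[p])) :=
  {z | ∃ g ∈ GammaT p n, z = tmulG p n g x}

/-- Double coset `Γ̃ x Γ̃`. -/
noncomputable def tdcG (x : Matrix (Idx n) (Idx n) ℚ_[p] × (Idx n → ℚ_[p])) :
    Set (Matrix (Idx n) (Idx n) ℚ_[p] × (Idx n → ℚ_[p])) :=
  {z | ∃ g ∈ GammaT p n, ∃ h ∈ GammaT p n, z = tmulG p n (tmulG p n g x) h}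

/-- Structure constants of the twisted Hecke ring. -/
noncomputable def mTG (α β ζ : Matrix (Idx n) (Idx n) ℚ_[p] × (Idx n → ℚ_[p])) : ℕ :=
  Nat.card {S : Set (Matrix (Idx n) (Idx n) ℚ_[p] × (Idx n → ℚ_[p])) |
    ∃ d ∈ tdcG p n β, tmulG p n ζ (tinvG p n d) ∈ tdcG p n α ∧ S = tlcG p n d}


/-! Let `ζ = (diag(p^k I, p^l I), e)` with `e` the `Sum.inr 0` basis vector. It factors as
`(diag(p^k I, I), 0) · (diag(I, p^l I), e)`, with multipliers of valuation `k` and `l`, so the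
coefficient of `Γ̃ ζ Γ̃` in `T̃(p^k) T̃(p^l)` is a sum of nonnegative structure constants, one of which
counts a nonempty set of left cosets; that set is finite because elements of `Δ̃` with
`v_p(μ) = m` that agree modulo `p^(2m)` lie in the same left coset. On the other hand `ζ` has no factorization `a · d` with `v_p(μ(a)) = l`
and `v_p(μ(d)) = k`: the `Sum.inr 0` row of `a = diag(p^k I, p^l I) d⁻¹` is divisible by
`p^(l-k)`, so the `Sum.inr 0` coordinate of the translation part of `a · d` is divisible by `p`,
whereas it equals `1`. Hence the coefficient in `T̃(p^l) T̃(p^k)` vanishes, and comparing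
coefficients in the basis of double cosets gives the claim. -/

section ClassCoefficients

variable {X κ R : Type*} [Ring R] {D : Set X} {cls : X → κ} {Tt : X → R}

variable (D cls Tt) in
def ClassesLinearIndependent : Prop :=
  ∀ F : Finset X, (∀ z ∈ F, z ∈ D) → (∀ z ∈ F, ∀ z' ∈ F, cls z = cls z' → z = z') →
    ∀ f : X → ℤ, ∑ z ∈ F, f z • Tt z = 0 → ∀ z ∈ F, f z = 0

open Classical in
theorem sum_filter_eq_zero_of_sum_zsmul_eq_zero
    (hTt : ∀ x ∈ D, ∀ y ∈ D, cls x = cls y → Tt x = Tt y)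
    (hfree : ClassesLinearIndependent D cls Tt)
    {ι : Type*} {s : Finset ι} {e : ι → X} (he : ∀ i ∈ s, e i ∈ D) {f : ι → ℤ}
    (h : ∑ i ∈ s, f i • Tt (e i) = 0) (K : κ) :
    ∑ i ∈ s with cls (e i) = K, f i = 0 := by
  -- Regroup the sum over a set of class representatives, to which `hfree` applies.
  rcases s.eq_empty_or_nonempty with rfl | ⟨i₀, -⟩
  · simp
  have : Nonempty ι := ⟨i₀⟩
  set C := s.image (cls ∘ e)
  set rep : κ → X := fun K => e (Function.invFunOn (cls ∘ e) s K)
  have hrep : ∀ K ∈ C, rep K ∈ D ∧ cls (rep K) = K := by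
    intro K hK
    have hex : ∃ i ∈ (s : Set ι), (cls ∘ e) i = K := by simpa [C] using hK
    exact ⟨he _ (Function.invFunOn_mem hex), Function.invFunOn_eq hex⟩
  set g : X → ℤ := fun w => ∑ i ∈ s with cls (e i) = cls w, f i
  have hsum : ∑ w ∈ C.image rep, g w • Tt w = 0 := by
    rw [Finset.sum_image fun K hK K' hK' hKK' => by
      rw [← (hrep K hK).2, ← (hrep K' hK').2, hKK']]
    rw [← h, ← Finset.sum_fiberwise_of_maps_to (g := fun i => cls (e i)) (t := C)
      fun i hi => Finset.mem_image_of_mem _ hi]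
    refine Finset.sum_congr rfl fun K hK => ?_
    rw [Finset.sum_smul, (hrep K hK).2]
    refine Finset.sum_congr rfl fun i hi => ?_
    rw [Finset.mem_filter] at hi
    rw [hTt _ (he i hi.1) _ (hrep K hK).1 (hi.2.trans (hrep K hK).2.symm)]
  by_cases hK : K ∈ C
  · have hC : ∀ w ∈ C.image rep, ∀ w' ∈ C.image rep, cls w = cls w' → w = w' := by
      simp only [Finset.mem_image]
      rintro _ ⟨K, hK, rfl⟩ _ ⟨K', hK', rfl⟩ hKK'
      rw [(hrep K hK).2, (hrep K' hK').2] at hKK'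
      rw [hKK']
    have := hfree _ (by simpa using fun K hK => (hrep K hK).1) hC g hsum (rep K)
      (Finset.mem_image_of_mem _ hK)
    simpa [g, (hrep K hK).2] using this
  · refine Finset.sum_eq_zero fun i hi => absurd ?_ hK
    rw [Finset.mem_filter] at hi
    exact hi.2 ▸ Finset.mem_image_of_mem _ hi.1

open Classical in
theorem sum_filter_eq_of_sum_zsmul_eq
    (hTt : ∀ x ∈ D, ∀ y ∈ D, cls x = cls y → Tt x = Tt y)
    (hfree : ClassesLinearIndependent D cls Tt)
    {ι ι' : Type*} {s : Finset ι} {s' : Finset ι'} {e : ι → X} {e' : ι' → X}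
    (he : ∀ i ∈ s, e i ∈ D) (he' : ∀ i ∈ s', e' i ∈ D) {f : ι → ℤ} {f' : ι' → ℤ}
    (h : ∑ i ∈ s, f i • Tt (e i) = ∑ i ∈ s', f' i • Tt (e' i)) (K : κ) :
    ∑ i ∈ s with cls (e i) = K, f i = ∑ i ∈ s' with cls (e' i) = K, f' i := by
  have h₀ := sum_filter_eq_zero_of_sum_zsmul_eq_zero hTt hfree (s := s.disjSum s')
    (e := Sum.elim e e') (f := Sum.elim f (-f')) (by simpa using ⟨he, he'⟩)
    (by simpa [neg_smul, ← sub_eq_add_neg] using sub_eq_zero.2 h) K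
  rw [Finset.sum_filter, Finset.sum_disjSum] at h₀
  rw [← sub_eq_zero, ← h₀, sub_eq_add_neg, Finset.sum_filter, Finset.sum_filter,
    ← Finset.sum_neg_distrib]
  simp only [neg_ite, neg_zero]
  rfl

theorem sum_mul_sum_eq_sum_sigma {A B : Finset X} (hA : ∀ x ∈ A, x ∈ D) (hB : ∀ y ∈ B, y ∈ D)
    (F : X → X → Finset X) (m : X → X → X → ℕ)
    (hmul : ∀ x ∈ D, ∀ y ∈ D, Tt x * Tt y = ∑ z ∈ F x y, (m x y z : ℤ) • Tt z) :
    (∑ x ∈ A, Tt x) * ∑ y ∈ B, Tt y =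
      ∑ i ∈ (A ×ˢ B).sigma (fun q => F q.1 q.2), (m i.1.1 i.1.2 i.2 : ℤ) • Tt i.2 := by
  rw [Finset.sum_mul_sum, ← Finset.sum_product', Finset.sum_sigma]
  refine Finset.sum_congr rfl fun q hq => ?_
  rw [Finset.mem_product] at hq
  exact hmul _ (hA _ hq.1) _ (hB _ hq.2)

open Classical in
theorem sum_filter_sigma_eq_of_commute
    (hTt : ∀ x ∈ D, ∀ y ∈ D, cls x = cls y → Tt x = Tt y)
    (hfree : ClassesLinearIndependent D cls Tt)
    (F : X → X → Finset X) (m : X → X → X → ℕ) (hF : ∀ x ∈ D, ∀ y ∈ D, ∀ z ∈ F x y, z ∈ D)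
    (hmul : ∀ x ∈ D, ∀ y ∈ D, Tt x * Tt y = ∑ z ∈ F x y, (m x y z : ℤ) • Tt z)
    {A B : Finset X} (hA : ∀ x ∈ A, x ∈ D) (hB : ∀ y ∈ B, y ∈ D)
    (hcomm : (∑ x ∈ A, Tt x) * ∑ y ∈ B, Tt y = (∑ y ∈ B, Tt y) * ∑ x ∈ A, Tt x) (K : κ) :
    ∑ i ∈ (A ×ˢ B).sigma (fun q => F q.1 q.2) with cls i.2 = K, m i.1.1 i.1.2 i.2 =
      ∑ i ∈ (B ×ˢ A).sigma (fun q => F q.1 q.2) with cls i.2 = K, m i.1.1 i.1.2 i.2 := by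
  have hmem {A B : Finset X} (hA : ∀ x ∈ A, x ∈ D) (hB : ∀ y ∈ B, y ∈ D) :
      ∀ i ∈ (A ×ˢ B).sigma (fun q => F q.1 q.2), i.2 ∈ D := by
    rintro ⟨⟨x, y⟩, z⟩ hi
    rw [Finset.mem_sigma, Finset.mem_product] at hi
    exact hF x (hA x hi.1.1) y (hB y hi.1.2) z hi.2
  rw [sum_mul_sum_eq_sum_sigma hA hB F m hmul, sum_mul_sum_eq_sum_sigma hB hA F m hmul] at hcomm
  exact_mod_cast sum_filter_eq_of_sum_zsmul_eq hTt hfree (hmem hA hB) (hmem hB hA) hcomm K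

end ClassCoefficients

section NormBounds

variable {l m o 𝕜 : Type*} [Fintype m] [NonUnitalSeminormedRing 𝕜] [IsUltrametricDist 𝕜]

theorem norm_mul_apply_le_of_le {A : Matrix l m 𝕜} {B : Matrix m o 𝕜} {a b : ℝ} {i : l} {j : o}
    (ha : 0 ≤ a) (hb : 0 ≤ b) (hA : ∀ t, ‖A i t‖ ≤ a) (hB : ∀ t, ‖B t j‖ ≤ b) :
    ‖(A * B) i j‖ ≤ a * b :=
  IsUltrametricDist.norm_sum_le_of_forall_le_of_nonneg (mul_nonneg ha hb) fun t _ =>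
    (norm_mul_le _ _).trans (mul_le_mul (hA t) (hB t) (norm_nonneg _) ha)

theorem norm_mulVec_apply_le_of_le {A : Matrix l m 𝕜} {v : m → 𝕜} {a b : ℝ} {i : l}
    (ha : 0 ≤ a) (hb : 0 ≤ b) (hA : ∀ t, ‖A i t‖ ≤ a) (hv : ∀ t, ‖v t‖ ≤ b) :
    ‖(A *ᵥ v) i‖ ≤ a * b :=
  IsUltrametricDist.norm_sum_le_of_forall_le_of_nonneg (mul_nonneg ha hb) fun t _ =>
    (norm_mul_le _ _).trans (mul_le_mul (hA t) (hv t) (norm_nonneg _) ha)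

end NormBounds

theorem norm_single_one_apply_le_one {ι 𝕜 : Type*} [DecidableEq ι] [SeminormedRing 𝕜]
    [NormOneClass 𝕜] (i₀ i : ι) : ‖(Pi.single i₀ 1 : ι → 𝕜) i‖ ≤ 1 := by
  rw [Pi.single_apply]
  split_ifs <;> simp

section Similitude

variable {p n}

theorem Jmat_mul_Jmat : Jmat p n * Jmat p n = -1 := by
  simp only [Jmat, fromBlocks_multiply]
  rw [← fromBlocks_one, fromBlocks_neg]
  simp

theorem norm_Jmat_apply_le (i j : Idx n) : ‖Jmat p n i j‖ ≤ 1 := by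
  rcases i with i | i <;> rcases j with j | j <;>
    simp [Jmat, fromBlocks, Matrix.one_apply] <;> split <;> simp

theorem simil_eq_of_transpose_mul_Jmat_mul {A : Matrix (Idx n) (Idx n) ℚ_[p]} {μ : ℚ_[p]}
    (h : Aᵀ * Jmat p n * A = μ • Jmat p n) : simil p n A = μ := by
  rw [simil, h]
  simp [Jmat]

theorem simil_one : simil p n 1 = 1 :=
  simil_eq_of_transpose_mul_Jmat_mul (by simp)

variable {A B : Matrix (Idx n) (Idx n) ℚ_[p]}

theorem transpose_mul_Jmat_mul_of_mem_GSpQ (hA : A ∈ GSpQ p n) :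
    Aᵀ * Jmat p n * A = simil p n A • Jmat p n := by
  obtain ⟨μ, -, h⟩ := hA
  rw [h, simil_eq_of_transpose_mul_Jmat_mul h]

theorem simil_ne_zero_of_mem_GSpQ (hA : A ∈ GSpQ p n) : simil p n A ≠ 0 := by
  obtain ⟨μ, hμ, h⟩ := hA
  rwa [simil_eq_of_transpose_mul_Jmat_mul h]

theorem det_sq_of_mem_GSpQ (hA : A ∈ GSpQ p n) :
    A.det ^ 2 = simil p n A ^ Fintype.card (Idx n) := by
  have hJ : (Jmat p n).det ≠ 0 := fun h0 => by
    simpa [h0, det_neg] using congrArg det (Jmat_mul_Jmat (p := p) (n := n))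
  have h := congrArg det (transpose_mul_Jmat_mul_of_mem_GSpQ hA)
  rw [det_mul, det_mul, det_transpose, det_smul] at h
  exact mul_right_cancel₀ hJ (by linear_combination h)

theorem isUnit_det_of_mem_GSpQ (hA : A ∈ GSpQ p n) : IsUnit A.det :=
  isUnit_iff_ne_zero.2 fun h0 => pow_ne_zero _ (simil_ne_zero_of_mem_GSpQ hA) <| by
    rw [← det_sq_of_mem_GSpQ hA, h0, zero_pow two_ne_zero]

theorem norm_det_eq_one_iff (hA : A ∈ GSpQ p n) : ‖A.det‖ = 1 ↔ ‖simil p n A‖ = 1 := by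
  have h := congrArg norm (det_sq_of_mem_GSpQ hA)
  rw [norm_pow, norm_pow] at h
  rw [← pow_eq_one_iff_of_nonneg (norm_nonneg _) two_ne_zero, h,
    pow_eq_one_iff_of_nonneg (norm_nonneg _) Fintype.card_ne_zero]

theorem transpose_mul_Jmat_mul_mul_eq (hA : A ∈ GSpQ p n) (hB : B ∈ GSpQ p n) :
    (A * B)ᵀ * Jmat p n * (A * B) = (simil p n A * simil p n B) • Jmat p n :=
  calc (A * B)ᵀ * Jmat p n * (A * B) = Bᵀ * (Aᵀ * Jmat p n * A) * B := by
        simp only [transpose_mul, Matrix.mul_assoc]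
    _ = _ := by
        rw [transpose_mul_Jmat_mul_of_mem_GSpQ hA, Matrix.mul_smul, Matrix.smul_mul,
          transpose_mul_Jmat_mul_of_mem_GSpQ hB, smul_smul]

theorem mul_mem_GSpQ (hA : A ∈ GSpQ p n) (hB : B ∈ GSpQ p n) : A * B ∈ GSpQ p n :=
  ⟨_, mul_ne_zero (simil_ne_zero_of_mem_GSpQ hA) (simil_ne_zero_of_mem_GSpQ hB),
    transpose_mul_Jmat_mul_mul_eq hA hB⟩

theorem simil_mul (hA : A ∈ GSpQ p n) (hB : B ∈ GSpQ p n) :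
    simil p n (A * B) = simil p n A * simil p n B :=
  simil_eq_of_transpose_mul_Jmat_mul (transpose_mul_Jmat_mul_mul_eq hA hB)

theorem inv_eq_of_mem_GSpQ (hA : A ∈ GSpQ p n) :
    A⁻¹ = (simil p n A)⁻¹ • (-Jmat p n * Aᵀ * Jmat p n) := by
  refine inv_eq_left_inv ?_
  rw [Matrix.smul_mul, Matrix.mul_assoc, Matrix.mul_assoc, ← Matrix.mul_assoc Aᵀ,
    transpose_mul_Jmat_mul_of_mem_GSpQ hA, Matrix.mul_smul, Matrix.neg_mul, Jmat_mul_Jmat,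
    neg_neg, smul_smul, inv_mul_cancel₀ (simil_ne_zero_of_mem_GSpQ hA), one_smul]

theorem transpose_inv_mul_Jmat_mul_inv_eq (hA : A ∈ GSpQ p n) :
    (A⁻¹)ᵀ * Jmat p n * A⁻¹ = (simil p n A)⁻¹ • Jmat p n :=
  calc (A⁻¹)ᵀ * Jmat p n * A⁻¹ = (simil p n A)⁻¹ • ((A⁻¹)ᵀ * (simil p n A • Jmat p n) * A⁻¹) := by
        rw [Matrix.mul_smul, Matrix.smul_mul, smul_smul,
          inv_mul_cancel₀ (simil_ne_zero_of_mem_GSpQ hA), one_smul]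
    _ = (simil p n A)⁻¹ • ((A * A⁻¹)ᵀ * Jmat p n * (A * A⁻¹)) := by
        rw [← transpose_mul_Jmat_mul_of_mem_GSpQ hA]
        simp only [transpose_mul, Matrix.mul_assoc]
    _ = _ := by simp [mul_nonsing_inv _ (isUnit_det_of_mem_GSpQ hA)]

theorem inv_mem_GSpQ (hA : A ∈ GSpQ p n) : A⁻¹ ∈ GSpQ p n :=
  ⟨_, inv_ne_zero (simil_ne_zero_of_mem_GSpQ hA), transpose_inv_mul_Jmat_mul_inv_eq hA⟩

theorem simil_inv (hA : A ∈ GSpQ p n) : simil p n A⁻¹ = (simil p n A)⁻¹ :=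
  simil_eq_of_transpose_mul_Jmat_mul (transpose_inv_mul_Jmat_mul_inv_eq hA)

theorem norm_simil_le_one (hA : ∀ i j, ‖A i j‖ ≤ 1) : ‖simil p n A‖ ≤ 1 := by
  have hAJ (t : Idx n) : ‖(Aᵀ * Jmat p n) (Sum.inl 0) t‖ ≤ 1 := by
    simpa using norm_mul_apply_le_of_le zero_le_one zero_le_one
      (fun s => hA s (Sum.inl 0)) fun s => norm_Jmat_apply_le s t
  simpa [simil] using
    norm_mul_apply_le_of_le zero_le_one zero_le_one hAJ fun t => hA t (Sum.inr 0)

theorem norm_inv_apply_le (hA : A ∈ GSpQ p n) (hint : ∀ i j, ‖A i j‖ ≤ 1) (i j : Idx n) :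
    ‖A⁻¹ i j‖ ≤ ‖simil p n A‖⁻¹ := by
  have hJA (t : Idx n) : ‖(-Jmat p n * Aᵀ) i t‖ ≤ 1 := by
    simpa using norm_mul_apply_le_of_le zero_le_one zero_le_one
      (fun s => by simpa using norm_Jmat_apply_le i s) fun s => hint t s
  rw [inv_eq_of_mem_GSpQ hA, Matrix.smul_apply, smul_eq_mul, norm_mul, norm_inv]
  refine mul_le_of_le_one_right (inv_nonneg.2 (norm_nonneg _)) ?_
  simpa using (norm_mul_apply_le_of_le zero_le_one zero_le_one hJA
    fun t => norm_Jmat_apply_le t j : ‖(-Jmat p n * Aᵀ * Jmat p n) i j‖ ≤ 1 * 1)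

end Similitude

section Twisted

variable {p n}

local notation "𝕏" => Matrix (Idx n) (Idx n) ℚ_[p] × (Idx n → ℚ_[p])

theorem tmulG_assoc (x y z : 𝕏) (hy : y.1 ∈ GSpQ p n) (hz : z.1 ∈ GSpQ p n) :
    tmulG p n (tmulG p n x y) z = tmulG p n x (tmulG p n y z) := by
  refine Prod.ext (Matrix.mul_assoc _ _ _) ?_
  simp only [tmulG, simil_mul hy hz, mulVec_add, mulVec_mulVec, mulVec_smul, smul_add, smul_smul,
    mul_comm (simil p n y.1), add_assoc]

theorem one_tmulG (x : 𝕏) : tmulG p n (1, 0) x = x := by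
  simp [tmulG]

theorem tmulG_one (x : 𝕏) : tmulG p n x (1, 0) = x := by
  simp [tmulG, simil_one]

theorem tmulG_tinvG {x : 𝕏} (hx : x.1 ∈ GSpQ p n) : tmulG p n x (tinvG p n x) = (1, 0) := by
  refine Prod.ext (mul_nonsing_inv _ (isUnit_det_of_mem_GSpQ hx)) ?_
  simp only [tmulG, tinvG, simil_inv hx]
  rw [mulVec_neg, mulVec_smul, mulVec_mulVec, mul_nonsing_inv _ (isUnit_det_of_mem_GSpQ hx),
    one_mulVec, neg_add_cancel]

theorem tinvG_tmulG {x : 𝕏} (hx : x.1 ∈ GSpQ p n) : tmulG p n (tinvG p n x) x = (1, 0) := by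
  have hμ := simil_ne_zero_of_mem_GSpQ hx
  refine Prod.ext (nonsing_inv_mul _ (isUnit_det_of_mem_GSpQ hx)) ?_
  simp [tmulG, tinvG, smul_smul, hμ]

theorem tmulG_tinvG_cancel_right (a : 𝕏) {d : 𝕏} (hd : d.1 ∈ GSpQ p n) :
    tmulG p n (tmulG p n a d) (tinvG p n d) = a := by
  rw [tmulG_assoc a d (tinvG p n d) hd (inv_mem_GSpQ hd), tmulG_tinvG hd, tmulG_one]

theorem tinvG_tmulG_cancel_right (a : 𝕏) {d : 𝕏} (hd : d.1 ∈ GSpQ p n) :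
    tmulG p n (tmulG p n a (tinvG p n d)) d = a := by
  rw [tmulG_assoc a (tinvG p n d) d (inv_mem_GSpQ hd) hd, tinvG_tmulG hd, tmulG_one]

theorem one_lt_prime : (1 : ℝ) < p := by
  exact_mod_cast (Fact.out : p.Prime).one_lt

theorem prime_pos : (0 : ℝ) < p :=
  zero_lt_one.trans one_lt_prime

theorem mem_DeltaTval_iff {m : ℕ} {x : 𝕏} :
    x ∈ DeltaTval p n m ↔ x ∈ DeltaT p n ∧ ‖simil p n x.1‖ = (p : ℝ) ^ (-(m : ℤ)) := by
  constructor
  · rintro ⟨hx, μ, hμ, h, hval⟩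
    rw [simil_eq_of_transpose_mul_Jmat_mul h, Padic.norm_eq_zpow_neg_valuation hμ, hval]
    exact ⟨hx, rfl⟩
  · rintro ⟨hx, hnorm⟩
    have hμ := simil_ne_zero_of_mem_GSpQ hx.1
    refine ⟨hx, _, hμ, transpose_mul_Jmat_mul_of_mem_GSpQ hx.1, ?_⟩
    rw [Padic.norm_eq_zpow_neg_valuation hμ] at hnorm
    exact neg_injective (zpow_right_injective₀ prime_pos one_lt_prime.ne' hnorm)

theorem GammaT_eq_DeltaTval_zero : GammaT p n = DeltaTval p n 0 := by
  ext x
  rw [mem_DeltaTval_iff, Nat.cast_zero, neg_zero, zpow_zero]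
  constructor
  · rintro ⟨⟨hQ, hint, hdet⟩, hv⟩
    exact ⟨⟨hQ, hint, hv⟩, (norm_det_eq_one_iff hQ).1 hdet⟩
  · rintro ⟨⟨hQ, hint, hv⟩, hμ⟩
    exact ⟨⟨hQ, hint, (norm_det_eq_one_iff hQ).2 hμ⟩, hv⟩

theorem one_zero_mem_GammaT : ((1, 0) : 𝕏) ∈ GammaT p n := by
  refine ⟨⟨⟨1, one_ne_zero, by simp⟩, fun i j => ?_, by simp⟩, by simp⟩
  change ‖(1 : Matrix (Idx n) (Idx n) ℚ_[p]) i j‖ ≤ 1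
  rw [one_apply]
  split_ifs <;> simp

theorem tmulG_mem_DeltaT {x y : 𝕏} (hx : x ∈ DeltaT p n) (hy : y ∈ DeltaT p n) :
    tmulG p n x y ∈ DeltaT p n := by
  obtain ⟨hxQ, hxint, hxv⟩ := hx
  obtain ⟨hyQ, hyint, hyv⟩ := hy
  refine ⟨mul_mem_GSpQ hxQ hyQ, fun i j => ?_, fun i => ?_⟩
  · simpa [tmulG] using
      norm_mul_apply_le_of_le zero_le_one zero_le_one (hxint i) fun t => hyint t j
  · refine (IsUltrametricDist.norm_add_le_max _ _).trans (max_le ?_ ?_)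
    · simpa using norm_mulVec_apply_le_of_le zero_le_one zero_le_one (hxint i) hyv
    · rw [Pi.smul_apply, smul_eq_mul, norm_mul]
      exact mul_le_one₀ (norm_simil_le_one hyint) (norm_nonneg _) (hxv i)

theorem tmulG_mem_DeltaTval {a b : ℕ} {x y : 𝕏} (hx : x ∈ DeltaTval p n a)
    (hy : y ∈ DeltaTval p n b) : tmulG p n x y ∈ DeltaTval p n (a + b) := by
  rw [mem_DeltaTval_iff] at hx hy ⊢
  refine ⟨tmulG_mem_DeltaT hx.1 hy.1, ?_⟩
  rw [tmulG, simil_mul hx.1.1 hy.1.1, norm_mul, hx.2, hy.2, ← zpow_add₀ prime_pos.ne']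
  push_cast
  ring_nf

theorem tmulG_mem_DeltaTval_of_mem_GammaT_left {m : ℕ} {g x : 𝕏} (hg : g ∈ GammaT p n)
    (hx : x ∈ DeltaTval p n m) : tmulG p n g x ∈ DeltaTval p n m := by
  rw [GammaT_eq_DeltaTval_zero] at hg
  simpa using tmulG_mem_DeltaTval hg hx

theorem tmulG_mem_DeltaTval_of_mem_GammaT_right {m : ℕ} {x g : 𝕏} (hx : x ∈ DeltaTval p n m)
    (hg : g ∈ GammaT p n) : tmulG p n x g ∈ DeltaTval p n m := by
  rw [GammaT_eq_DeltaTval_zero] at hg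
  simpa using tmulG_mem_DeltaTval hx hg

theorem tinvG_mem_GammaT {g : 𝕏} (hg : g ∈ GammaT p n) : tinvG p n g ∈ GammaT p n := by
  rw [GammaT_eq_DeltaTval_zero, mem_DeltaTval_iff, Nat.cast_zero, neg_zero, zpow_zero] at hg ⊢
  obtain ⟨⟨hQ, hint, hv⟩, hμ⟩ := hg
  have hinvint (i j : Idx n) : ‖g.1⁻¹ i j‖ ≤ 1 := by
    simpa [hμ] using norm_inv_apply_le hQ hint i j
  refine ⟨⟨inv_mem_GSpQ hQ, hinvint, fun i => ?_⟩,
    by rw [tinvG, simil_inv hQ, norm_inv, hμ, inv_one]⟩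
  simp only [tinvG]
  rw [Pi.neg_apply, norm_neg, Pi.smul_apply, smul_eq_mul, norm_mul, norm_inv, hμ, inv_one,
    one_mul]
  simpa using norm_mulVec_apply_le_of_le zero_le_one zero_le_one (hinvint i) hv

theorem tmulG_mem_GammaT {g h : 𝕏} (hg : g ∈ GammaT p n) (hh : h ∈ GammaT p n) :
    tmulG p n g h ∈ GammaT p n := by
  rw [GammaT_eq_DeltaTval_zero] at hh ⊢
  exact tmulG_mem_DeltaTval_of_mem_GammaT_left hg hh

theorem self_mem_tdcG (x : 𝕏) : x ∈ tdcG p n x :=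
  ⟨(1, 0), one_zero_mem_GammaT, (1, 0), one_zero_mem_GammaT, by rw [one_tmulG, tmulG_one]⟩

theorem tdcG_subset_DeltaTval {m : ℕ} {y : 𝕏} (hy : y ∈ DeltaTval p n m) :
    tdcG p n y ⊆ DeltaTval p n m := by
  rintro _ ⟨g, hg, h, hh, rfl⟩
  exact tmulG_mem_DeltaTval_of_mem_GammaT_right (tmulG_mem_DeltaTval_of_mem_GammaT_left hg hy) hh

theorem tlcG_tmulG_of_mem_GammaT {g : 𝕏} (hg : g ∈ GammaT p n) {x : 𝕏} (hx : x.1 ∈ GSpQ p n) :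
    tlcG p n (tmulG p n g x) = tlcG p n x := by
  ext z
  constructor
  · rintro ⟨h, hh, rfl⟩
    exact ⟨tmulG p n h g, tmulG_mem_GammaT hh hg, (tmulG_assoc h g x hg.1.1 hx).symm⟩
  · rintro ⟨h, hh, rfl⟩
    refine ⟨tmulG p n h (tinvG p n g), tmulG_mem_GammaT hh (tinvG_mem_GammaT hg), ?_⟩
    rw [tmulG_assoc h (tinvG p n g) (tmulG p n g x) (inv_mem_GSpQ hg.1.1)
      (mul_mem_GSpQ hg.1.1 hx), ← tmulG_assoc (tinvG p n g) g x hg.1.1 hx, tinvG_tmulG hg.1.1,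
      one_tmulG]

theorem norm_sub_mul_inv_apply_le {m : ℕ} {d : 𝕏} (hd : d ∈ DeltaTval p n m)
    {A : Matrix (Idx n) (Idx n) ℚ_[p]} (hA : ∀ i j, ‖A i j - d.1 i j‖ ≤ (p : ℝ) ^ (-(2 * m : ℤ)))
    (i j : Idx n) : ‖((A - d.1) * d.1⁻¹) i j‖ ≤ (p : ℝ) ^ (-(m : ℤ)) := by
  obtain ⟨⟨hQ, hint, -⟩, hμ⟩ := mem_DeltaTval_iff.1 hd
  have hμinv : ‖simil p n d.1‖⁻¹ = (p : ℝ) ^ (m : ℤ) := by rw [hμ, _root_.zpow_neg, inv_inv]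
  calc ‖((A - d.1) * d.1⁻¹) i j‖ ≤ (p : ℝ) ^ (-(2 * m : ℤ)) * (p : ℝ) ^ (m : ℤ) :=
        norm_mul_apply_le_of_le (zpow_pos prime_pos _).le (zpow_pos prime_pos _).le
          (fun t => hA i t) fun t => hμinv ▸ norm_inv_apply_le hQ hint t j
    _ = (p : ℝ) ^ (-(m : ℤ)) := by rw [← zpow_add₀ prime_pos.ne']; ring_nf

theorem tmulG_tinvG_mem_GammaT_of_norm_sub_le {m : ℕ} {d d' : 𝕏} (hd : d ∈ DeltaTval p n m)
    (hd' : d' ∈ DeltaTval p n m)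
    (h₁ : ∀ i j, ‖d'.1 i j - d.1 i j‖ ≤ (p : ℝ) ^ (-(2 * m : ℤ)))
    (h₂ : ∀ i, ‖d'.2 i - d.2 i‖ ≤ (p : ℝ) ^ (-(2 * m : ℤ))) :
    tmulG p n d' (tinvG p n d) ∈ GammaT p n := by
  have hE := norm_sub_mul_inv_apply_le hd h₁
  rw [mem_DeltaTval_iff] at hd hd'
  obtain ⟨⟨hQ, -, hv⟩, hμ⟩ := hd
  set E := (d'.1 - d.1) * d.1⁻¹ with hE_def
  have hpm : (p : ℝ) ^ (-(m : ℤ)) ≤ 1 := zpow_le_one_of_nonpos₀ one_lt_prime.le (by omega)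
  have hμinv : ‖simil p n d.1‖⁻¹ = (p : ℝ) ^ (m : ℤ) := by rw [hμ, _root_.zpow_neg, inv_inv]
  have hG : d'.1 * d.1⁻¹ = 1 + E := by
    rw [hE_def, sub_mul, mul_nonsing_inv _ (isUnit_det_of_mem_GSpQ hQ)]
    abel
  have hsnd : (tmulG p n d' (tinvG p n d)).2 = (simil p n d.1)⁻¹ • (d'.2 - d.2 - E *ᵥ d.2) := by
    simp only [tmulG, tinvG, simil_inv hQ]
    rw [mulVec_neg, mulVec_smul, mulVec_mulVec, hG, add_mulVec, one_mulVec]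
    module
  rw [GammaT_eq_DeltaTval_zero, mem_DeltaTval_iff, Nat.cast_zero, neg_zero, zpow_zero]
  refine ⟨⟨mul_mem_GSpQ hd'.1.1 (inv_mem_GSpQ hQ), fun i j => ?_, fun i => ?_⟩, ?_⟩
  · change ‖(d'.1 * d.1⁻¹) i j‖ ≤ 1
    rw [hG, Matrix.add_apply]
    refine (IsUltrametricDist.norm_add_le_max _ _).trans (max_le ?_ ((hE i j).trans hpm))
    rw [one_apply]
    split_ifs <;> simp
  · have hw : ‖(d'.2 - d.2 - E *ᵥ d.2) i‖ ≤ (p : ℝ) ^ (-(m : ℤ)) := by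
      rw [Pi.sub_apply, sub_eq_add_neg, Pi.sub_apply]
      refine (IsUltrametricDist.norm_add_le_max _ _).trans (max_le ?_ ?_)
      · exact (h₂ i).trans (zpow_le_zpow_right₀ one_lt_prime.le (by omega))
      · simpa using norm_mulVec_apply_le_of_le (zpow_pos prime_pos _).le zero_le_one (hE i) hv
    rw [hsnd, Pi.smul_apply, smul_eq_mul, norm_mul, norm_inv, hμinv]
    calc (p : ℝ) ^ (m : ℤ) * ‖(d'.2 - d.2 - E *ᵥ d.2) i‖
        ≤ (p : ℝ) ^ (m : ℤ) * (p : ℝ) ^ (-(m : ℤ)) := by gcongr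
      _ = 1 := by rw [← zpow_add₀ prime_pos.ne', add_neg_cancel, zpow_zero]
  · change ‖simil p n (d'.1 * d.1⁻¹)‖ = 1
    rw [simil_mul hd'.1.1 (inv_mem_GSpQ hQ), simil_inv hQ, norm_mul, norm_inv, hμinv, hd'.2,
      ← zpow_add₀ prime_pos.ne', neg_add_cancel, zpow_zero]

theorem tlcG_eq_of_norm_sub_le {m : ℕ} {d d' : 𝕏} (hd : d ∈ DeltaTval p n m)
    (hd' : d' ∈ DeltaTval p n m)
    (h₁ : ∀ i j, ‖d'.1 i j - d.1 i j‖ ≤ (p : ℝ) ^ (-(2 * m : ℤ)))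
    (h₂ : ∀ i, ‖d'.2 i - d.2 i‖ ≤ (p : ℝ) ^ (-(2 * m : ℤ))) :
    tlcG p n d' = tlcG p n d := by
  conv_lhs => rw [← tinvG_tmulG_cancel_right d' hd.1.1]
  exact tlcG_tmulG_of_mem_GammaT (tmulG_tinvG_mem_GammaT_of_norm_sub_le hd hd' h₁ h₂) hd.1.1

variable (p) in
noncomputable def reduceModPow (N : ℕ) (x : ℚ_[p]) : ZMod (p ^ N) :=
  if h : ‖x‖ ≤ 1 then PadicInt.toZModPow N ⟨x, h⟩ else 0

theorem norm_sub_le_of_reduceModPow_eq {N : ℕ} {x y : ℚ_[p]} (hx : ‖x‖ ≤ 1) (hy : ‖y‖ ≤ 1)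
    (h : reduceModPow p N x = reduceModPow p N y) : ‖x - y‖ ≤ (p : ℝ) ^ (-(N : ℤ)) := by
  rw [reduceModPow, reduceModPow, dif_pos hx, dif_pos hy] at h
  set a : ℤ_[p] := ⟨x, hx⟩
  set b : ℤ_[p] := ⟨y, hy⟩
  have hker : a - b ∈ RingHom.ker (PadicInt.toZModPow (p := p) N) := by
    rw [RingHom.mem_ker, map_sub, h, sub_self]
  rw [PadicInt.ker_toZModPow, ← PadicInt.norm_le_pow_iff_mem_span_pow] at hker
  exact hker

theorem finite_image_tlcG_DeltaTval (m : ℕ) : (tlcG p n '' DeltaTval p n m).Finite := by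
  have : NeZero (p ^ (2 * m)) := ⟨pow_ne_zero _ (Fact.out : p.Prime).ne_zero⟩
  let red (d : 𝕏) : (Idx n → Idx n → ZMod (p ^ (2 * m))) × (Idx n → ZMod (p ^ (2 * m))) :=
    (fun i j => reduceModPow p (2 * m) (d.1 i j), fun i => reduceModPow p (2 * m) (d.2 i))
  refine (Set.finite_range fun c => tlcG p n (Function.invFunOn red (DeltaTval p n m) c)).subset ?_
  rintro _ ⟨d, hd, rfl⟩
  have hex : ∃ d' ∈ DeltaTval p n m, red d' = red d := ⟨d, hd, rfl⟩
  have hd' := Function.invFunOn_mem hex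
  have hred := Function.invFunOn_eq hex
  refine ⟨red d, tlcG_eq_of_norm_sub_le hd hd' (fun i j => ?_) fun i => ?_⟩
  · simpa using norm_sub_le_of_reduceModPow_eq (hd'.1.2.1 i j) (hd.1.2.1 i j)
      (congrFun (congrFun (congrArg Prod.fst hred) i) j)
  · simpa using norm_sub_le_of_reduceModPow_eq (hd'.1.2.2 i) (hd.1.2.2 i)
      (congrFun (congrArg Prod.snd hred) i)

variable (p n) in
noncomputable def scalarBlockDiag (a b : ℚ_[p]) : Matrix (Idx n) (Idx n) ℚ_[p] :=
  diagonal (Sum.elim (fun _ => a) fun _ => b)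

theorem transpose_scalarBlockDiag_mul_Jmat_mul (a b : ℚ_[p]) :
    (scalarBlockDiag p n a b)ᵀ * Jmat p n * scalarBlockDiag p n a b = (a * b) • Jmat p n := by
  ext i j
  rw [scalarBlockDiag, diagonal_transpose, mul_diagonal, diagonal_mul, Matrix.smul_apply,
    smul_eq_mul]
  rcases i with i | i <;> rcases j with j | j <;> simp [Jmat, one_apply, mul_comm]

theorem norm_p_pow_le_one (k : ℕ) : ‖(p : ℚ_[p]) ^ k‖ ≤ 1 := by
  rw [Padic.norm_p_pow]
  exact zpow_le_one_of_nonpos₀ one_lt_prime.le (by omega)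

theorem mk_scalarBlockDiag_mem_DeltaTval {m : ℕ} {a b : ℚ_[p]} (ha : ‖a‖ ≤ 1) (hb : ‖b‖ ≤ 1)
    (hab : ‖a * b‖ = (p : ℝ) ^ (-(m : ℤ))) {v : Idx n → ℚ_[p]} (hv : ∀ i, ‖v i‖ ≤ 1) :
    (scalarBlockDiag p n a b, v) ∈ DeltaTval p n m := by
  have hab0 : a * b ≠ 0 := norm_ne_zero_iff.1 (hab ▸ (zpow_pos prime_pos _).ne')
  refine mem_DeltaTval_iff.2
    ⟨⟨⟨a * b, hab0, transpose_scalarBlockDiag_mul_Jmat_mul a b⟩, fun i j => ?_, hv⟩,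
    by rw [simil_eq_of_transpose_mul_Jmat_mul (transpose_scalarBlockDiag_mul_Jmat_mul a b), hab]⟩
  change ‖scalarBlockDiag p n a b i j‖ ≤ 1
  rw [scalarBlockDiag, diagonal_apply]
  split_ifs
  · rcases i with i | i <;> simpa
  · simp

variable (p n) in
noncomputable def zetaElt (k l : ℕ) : 𝕏 :=
  (scalarBlockDiag p n (p ^ k) (p ^ l), Pi.single (Sum.inr 0) 1)

variable (p n) in
noncomputable def zetaLeft (k : ℕ) : 𝕏 := (scalarBlockDiag p n (p ^ k) 1, 0)

variable (p n) in
noncomputable def zetaRight (l : ℕ) : 𝕏 :=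
  (scalarBlockDiag p n 1 (p ^ l), Pi.single (Sum.inr 0) 1)

theorem tmulG_zetaLeft_zetaRight (k l : ℕ) :
    tmulG p n (zetaLeft p n k) (zetaRight p n l) = zetaElt p n k l := by
  refine Prod.ext ?_ (funext fun i => ?_)
  · simp [tmulG, zetaLeft, zetaRight, zetaElt, scalarBlockDiag]
  · simp [tmulG, zetaLeft, zetaRight, zetaElt, scalarBlockDiag, Pi.single_apply]

theorem zetaElt_mem_DeltaT (k l : ℕ) : zetaElt p n k l ∈ DeltaT p n :=
  (mk_scalarBlockDiag_mem_DeltaTval (m := k + l) (norm_p_pow_le_one k) (norm_p_pow_le_one l)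
    (by rw [← pow_add, Padic.norm_p_pow]) (norm_single_one_apply_le_one _)).1

theorem zetaLeft_mem_DeltaTval (k : ℕ) : zetaLeft p n k ∈ DeltaTval p n k :=
  mk_scalarBlockDiag_mem_DeltaTval (norm_p_pow_le_one k) (by simp)
    (by rw [mul_one, Padic.norm_p_pow]) (by simp)

theorem zetaRight_mem_DeltaTval (l : ℕ) : zetaRight p n l ∈ DeltaTval p n l :=
  mk_scalarBlockDiag_mem_DeltaTval (by simp) (norm_p_pow_le_one l)
    (by rw [one_mul, Padic.norm_p_pow]) (norm_single_one_apply_le_one _)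

theorem tmulG_ne_zetaElt {k l : ℕ} (hk : 0 < k) (hkl : k < l) {a d : 𝕏}
    (ha : a ∈ DeltaTval p n l) (hd : d ∈ DeltaTval p n k) : tmulG p n a d ≠ zetaElt p n k l := by
  intro h
  rw [mem_DeltaTval_iff] at ha hd
  obtain ⟨⟨hdQ, hdint, hdv⟩, hμ⟩ := hd
  have hp : (0 : ℝ) < p := prime_pos
  have ha1 : a.1 = scalarBlockDiag p n (p ^ k) (p ^ l) * d.1⁻¹ := by
    rw [show scalarBlockDiag p n (p ^ k) (p ^ l) = a.1 * d.1 from (congrArg Prod.fst h).symm,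
      Matrix.mul_assoc, mul_nonsing_inv _ (isUnit_det_of_mem_GSpQ hdQ), Matrix.mul_one]
  have hrow (j : Idx n) : ‖a.1 (Sum.inr 0) j‖ ≤ (p : ℝ) ^ ((k : ℤ) - l) := by
    rw [ha1, scalarBlockDiag, diagonal_mul, Sum.elim_inr, norm_mul, Padic.norm_p_pow]
    calc (p : ℝ) ^ (-(l : ℤ)) * ‖d.1⁻¹ (Sum.inr 0) j‖
        ≤ (p : ℝ) ^ (-(l : ℤ)) * (p : ℝ) ^ (k : ℤ) := by
          gcongr
          simpa [hμ] using norm_inv_apply_le hdQ hdint (Sum.inr 0) j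
      _ = (p : ℝ) ^ ((k : ℤ) - l) := by rw [← zpow_add₀ hp.ne']; ring_nf
  have h₁ : ‖(a.1 *ᵥ d.2) (Sum.inr 0)‖ ≤ (p : ℝ) ^ ((k : ℤ) - l) := by
    simpa using norm_mulVec_apply_le_of_le (zpow_pos hp _).le zero_le_one hrow hdv
  have h₂ : ‖(simil p n d.1 • a.2) (Sum.inr 0)‖ ≤ (p : ℝ) ^ (-(k : ℤ)) := by
    rw [Pi.smul_apply, smul_eq_mul, norm_mul, hμ]
    exact mul_le_of_le_one_right (zpow_pos hp _).le (ha.1.2.2 _)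
  have h₃ : (a.1 *ᵥ d.2 + simil p n d.1 • a.2) (Sum.inr 0) = 1 := by
    simpa [tmulG, zetaElt] using congrFun (congrArg Prod.snd h) (Sum.inr 0)
  have := (IsUltrametricDist.norm_add_le_max _ _).trans (max_le_max h₁ h₂)
  rw [← Pi.add_apply, h₃, norm_one] at this
  exact this.not_gt (max_lt (zpow_lt_one_of_neg₀ one_lt_prime (by omega))
    (zpow_lt_one_of_neg₀ one_lt_prime (by omega)))

theorem mTG_eq_zero_of_tdcG_eq_zetaElt {k l : ℕ} (hk : 0 < k) (hkl : k < l) {x y z : 𝕏}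
    (hx : x ∈ DeltaTval p n l) (hy : y ∈ DeltaTval p n k)
    (hz : tdcG p n z = tdcG p n (zetaElt p n k l)) : mTG p n x y z = 0 := by
  rw [mTG, Nat.card_eq_zero]
  refine Or.inl (Set.isEmpty_coe_sort.2 (Set.eq_empty_iff_forall_notMem.2 ?_))
  rintro _ ⟨d, hdy, hux, -⟩
  have hd := tdcG_subset_DeltaTval hy hdy
  have hu := tdcG_subset_DeltaTval hx hux
  obtain ⟨g, hg, h, hh, hζ⟩ : zetaElt p n k l ∈ tdcG p n z := hz ▸ self_mem_tdcG _
  -- `ζ = g z h = (g u) (d h)` with `u = z d⁻¹`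
  refine tmulG_ne_zetaElt hk hkl (tmulG_mem_DeltaTval_of_mem_GammaT_left hg hu)
    (tmulG_mem_DeltaTval_of_mem_GammaT_right hd hh) ?_
  rw [hζ, ← tmulG_assoc _ d h hd.1.1 hh.1.1, tmulG_assoc g _ d hu.1.1 hd.1.1,
    tinvG_tmulG_cancel_right z hd.1.1]

theorem mTG_ne_zero_of_tdcG_eq_zetaElt {k l : ℕ} {x y z : 𝕏} (hy : y ∈ DeltaTval p n l)
    (hx : tdcG p n x = tdcG p n (zetaLeft p n k)) (hy' : tdcG p n y = tdcG p n (zetaRight p n l))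
    (hz : tdcG p n z = tdcG p n (zetaElt p n k l)) : mTG p n x y z ≠ 0 := by
  have hL := (zetaLeft_mem_DeltaTval (p := p) (n := n) k).1.1
  have hR := (zetaRight_mem_DeltaTval (p := p) (n := n) l).1.1
  obtain ⟨g, hg, h, hh, rfl⟩ : z ∈ tdcG p n (zetaElt p n k l) := hz ▸ self_mem_tdcG z
  -- `z = g ζ h = (g ζ₁) (ζ₂ h)` where `ζ = ζ₁ ζ₂`, so `d = ζ₂ h` contributes a left coset
  set d := tmulG p n (zetaRight p n l) h
  have hdQ : d.1 ∈ GSpQ p n := mul_mem_GSpQ hR hh.1.1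
  have hd : d ∈ tdcG p n y := hy' ▸ ⟨(1, 0), one_zero_mem_GammaT, h, hh, by rw [one_tmulG]⟩
  have hzd : tmulG p n (tmulG p n (tmulG p n g (zetaElt p n k l)) h) (tinvG p n d) =
      tmulG p n g (zetaLeft p n k) := by
    rw [← tmulG_zetaLeft_zetaRight, ← tmulG_assoc g _ _ hL hR, tmulG_assoc _ _ h hR hh.1.1,
      tmulG_tinvG_cancel_right _ hdQ]
  rw [mTG, Nat.card_ne_zero]
  refine ⟨⟨⟨_, d, hd, ?_, rfl⟩⟩, ((finite_image_tlcG_DeltaTval l).subset ?_).to_subtype⟩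
  · rw [hzd, hx]
    exact ⟨g, hg, (1, 0), one_zero_mem_GammaT, by rw [tmulG_one]⟩
  · rintro _ ⟨d', hd', -, rfl⟩
    exact ⟨d', tdcG_subset_DeltaTval hy hd', rfl⟩

end Twisted

theorem heisenberg_hecke_noncommutative
    (R : Type*) [Ring R]
    (Tt : Matrix (Idx n) (Idx n) ℚ_[p] × (Idx n → ℚ_[p]) → R)
    (Tp : ℕ → R)
    -- `Tt` is constant exactly on double cosets:
    (hTt : ∀ x ∈ DeltaT p n, ∀ y ∈ DeltaT p n, (tdcG p n x = tdcG p n y ↔ Tt x = Tt y))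
    -- the `Tt`-classes are linearly independent over ℤ:
    (hfree : ∀ F : Finset (Matrix (Idx n) (Idx n) ℚ_[p] × (Idx n → ℚ_[p])),
      (∀ z ∈ F, z ∈ DeltaT p n) →
      (∀ z ∈ F, ∀ z' ∈ F, tdcG p n z = tdcG p n z' → z = z') →
      ∀ f : Matrix (Idx n) (Idx n) ℚ_[p] × (Idx n → ℚ_[p]) → ℤ,
        ∑ z ∈ F, f z • Tt z = 0 → ∀ z ∈ F, f z = 0)
    -- multiplication is given by the structure constants:
    (hmul : ∀ x ∈ DeltaT p n, ∀ y ∈ DeltaT p n,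
      ∃ F : Finset (Matrix (Idx n) (Idx n) ℚ_[p] × (Idx n → ℚ_[p])),
        (∀ z ∈ F, z ∈ DeltaT p n) ∧
        (∀ z ∈ F, ∀ z' ∈ F, tdcG p n z = tdcG p n z' → z = z') ∧
        (∀ z ∈ DeltaT p n, mTG p n x y z ≠ 0 → ∃ z' ∈ F, tdcG p n z' = tdcG p n z) ∧
        Tt x * Tt y = ∑ z ∈ F, (mTG p n x y z : ℤ) • Tt z)
    -- `Tp m = T̃(p^m)` is the sum of the basis elements with `v_p(μ) = m`:
    (hTp : ∀ m : ℕ, ∃ F : Finset (Matrix (Idx n) (Idx n) ℚ_[p] × (Idx n → ℚ_[p])),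
      (∀ z ∈ F, z ∈ DeltaTval p n m) ∧
      (∀ z ∈ F, ∀ z' ∈ F, tdcG p n z = tdcG p n z' → z = z') ∧
      (∀ z ∈ DeltaTval p n m, ∃ z' ∈ F, tdcG p n z' = tdcG p n z) ∧
      Tp m = ∑ z ∈ F, Tt z)
    (k l : ℕ) (hk : 0 < k) (hkl : k < l) :
    Tp k * Tp l ≠ Tp l * Tp k := by
  classical
  intro hcomm
  obtain ⟨Fk, hFk, -, hFk_cov, hTpk⟩ := hTp k
  obtain ⟨Fl, hFl, -, hFl_cov, hTpl⟩ := hTp l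
  choose! F hFΔ _ hF_cov hF_mul using hmul
  have key := sum_filter_sigma_eq_of_commute (fun x hx y hy => (hTt x hx y hy).1) hfree F
    (mTG p n) hFΔ hF_mul (fun x hx => (hFk x hx).1) (fun y hy => (hFl y hy).1)
    (by rw [← hTpk, ← hTpl, hcomm]) (tdcG p n (zetaElt p n k l))
  have hzero : ∑ i ∈ (Fl ×ˢ Fk).sigma (fun q => F q.1 q.2) with
      tdcG p n i.2 = tdcG p n (zetaElt p n k l), mTG p n i.1.1 i.1.2 i.2 = 0 := by
    refine Finset.sum_eq_zero fun i hi => ?_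
    obtain ⟨hi, hic⟩ := Finset.mem_filter.1 hi
    rw [Finset.mem_sigma, Finset.mem_product] at hi
    exact mTG_eq_zero_of_tdcG_eq_zetaElt hk hkl (hFl _ hi.1.1) (hFk _ hi.1.2) hic
  obtain ⟨x₀, hx₀, hx₀c⟩ := hFk_cov _ (zetaLeft_mem_DeltaTval k)
  obtain ⟨y₀, hy₀, hy₀c⟩ := hFl_cov _ (zetaRight_mem_DeltaTval l)
  obtain ⟨z₀, hz₀, hz₀c⟩ := hF_cov x₀ (hFk x₀ hx₀).1 y₀ (hFl y₀ hy₀).1 _ (zetaElt_mem_DeltaT k l)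
    (mTG_ne_zero_of_tdcG_eq_zetaElt (hFl y₀ hy₀) hx₀c hy₀c rfl)
  exact mTG_ne_zero_of_tdcG_eq_zetaElt (hFl y₀ hy₀) hx₀c hy₀c hz₀c
    (Finset.sum_eq_zero_iff.1 (key.trans hzero) ⟨(x₀, y₀), z₀⟩ (by simp [hx₀, hy₀, hz₀, hz₀c]))
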